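/- With noise-free landmark measurements y_i = R^T(p_i - p), the innovation terms satisfy y := Σ k_i (p_i - p̂ - R̂ y_i) = R̃^T p̃ and σ_R := (1/2)Σ k_i (p_i - p_c)^×(p_i - p̂ - R̂ y_i) = ψ(M R̃), where R̃ = R R̂^T and p̃ = p - R̃p̂ - (I₃ - R̃)p_c. -/

import Mathlib

/-! The innovations are `eᵢ - R̃ᵀ eᵢ + R̃ᵀ p̃` with `eᵢ = pᵢ - p_c`: a "rotation error" part that
is linear in `eᵢ` plus a common "translation error" `R̃ᵀ p̃`. Since the weighted sum of the `eᵢ`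
vanishes, the weighted sum of the innovations retains only `R̃ᵀ p̃`, and its weighted moment
`½ Σ kᵢ eᵢ × (·)` retains only `-½ Σ kᵢ eᵢ × R̃ᵀ eᵢ`, which is `ψ(M R̃)` because
`ψ(a bᵀ) = -½ a × b`. -/

open Matrix

noncomputable section

def SO3 (R : Matrix (Fin 3) (Fin 3) ℝ) : Prop :=
  Rᵀ * R = 1 ∧ R * Rᵀ = 1 ∧ R.det = 1

def skew (x : Fin 3 → ℝ) : Matrix (Fin 3) (Fin 3) ℝ :=
  !![0, -x 2, x 1; x 2, 0, -x 0; -x 1, x 0, 0]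

def psi (A : Matrix (Fin 3) (Fin 3) ℝ) : Fin 3 → ℝ :=
  (2 : ℝ)⁻¹ • ![A 2 1 - A 1 2, A 0 2 - A 2 0, A 1 0 - A 0 1]

theorem sum_smul_sub_eq_zero {ι K E : Type*} [Fintype ι] [CommRing K] [AddCommGroup E]
    [Module K E] {k : ι → K} {x : ι → E} {c : E} (hsum : ∑ i, k i = 1)
    (hc : c = ∑ i, k i • x i) : ∑ i, k i • (x i - c) = 0 := by
  simp only [smul_sub, Finset.sum_sub_distrib, ← Finset.sum_smul, hsum, one_smul, hc, sub_self]

theorem transpose_mul_self_of_mul_transpose {n K : Type*} [Fintype n] [DecidableEq n]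
    [CommRing K] {A B : Matrix n n K} (hA : Aᵀ * A = 1) (hB : B * Bᵀ = 1) :
    (A * Bᵀ)ᵀ * (A * Bᵀ) = 1 := by
  rw [transpose_mul, transpose_transpose, Matrix.mul_assoc, ← Matrix.mul_assoc Aᵀ, hA,
    Matrix.one_mul, hB]

theorem sub_sub_transpose_mulVec_sub {n K : Type*} [Fintype n] [DecidableEq n] [CommRing K]
    {Q : Matrix n n K} (hQ : Qᵀ * Q = 1) (x x₀ c p : n → K) :
    x - x₀ - Qᵀ *ᵥ (x - p) = (x - c) - Qᵀ *ᵥ (x - c) + Qᵀ *ᵥ (p - Q *ᵥ x₀ - (1 - Q) *ᵥ c) := by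
  simp only [mulVec_sub, sub_mulVec, one_mulVec, mulVec_mulVec, hQ]
  abel

theorem sum_smul_sub_add_eq {ι K E : Type*} [Fintype ι] [CommRing K] [AddCommGroup E]
    [Module K E] (f : E →ₗ[K] E) {k : ι → K} {e : ι → E} (hsum : ∑ i, k i = 1)
    (he : ∑ i, k i • e i = 0) (v : E) : ∑ i, k i • (e i - f (e i) + v) = v := by
  have hfe : ∑ i, k i • f (e i) = 0 := by simp only [← map_smul, ← map_sum, he, map_zero]
  simp only [smul_add, smul_sub, Finset.sum_add_distrib, Finset.sum_sub_distrib, he, hfe,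
    ← Finset.sum_smul, hsum, one_smul, sub_zero, zero_add]

theorem sum_smul_cross_sub_add_eq {ι K : Type*} [Fintype ι] [CommRing K]
    (A : Matrix (Fin 3) (Fin 3) K) {k : ι → K} {e : ι → Fin 3 → K}
    (he : ∑ i, k i • e i = 0) (v : Fin 3 → K) :
    ∑ i, k i • e i ⨯₃ (e i - A *ᵥ e i + v) = -∑ i, k i • e i ⨯₃ (A *ᵥ e i) := by
  have hev : ∑ i, k i • e i ⨯₃ v = 0 := by
    simp only [← LinearMap.map_smul₂, ← LinearMap.sum_apply, ← map_sum, he, map_zero,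
      LinearMap.zero_apply]
  simp only [map_add, map_sub, cross_self, zero_sub, smul_add, smul_neg,
    Finset.sum_add_distrib, Finset.sum_neg_distrib, hev, add_zero]

theorem skew_mulVec (x v : Fin 3 → ℝ) : skew x *ᵥ v = x ⨯₃ v := by
  ext i
  fin_cases i <;> simp [skew, cross_apply, mulVec, dotProduct, Fin.sum_univ_three] <;> ring

theorem psi_vecMulVec (a b : Fin 3 → ℝ) : psi (vecMulVec a b) = -(2 : ℝ)⁻¹ • a ⨯₃ b := by
  ext i
  fin_cases i <;> simp [psi, cross_apply, vecMulVec_apply] <;> ring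

def psiLinearMap : Matrix (Fin 3) (Fin 3) ℝ →ₗ[ℝ] Fin 3 → ℝ where
  toFun := psi
  map_add' A B := by ext i; fin_cases i <;> simp [psi] <;> ring
  map_smul' c A := by ext i; fin_cases i <;> simp [psi] <;> ring

theorem psi_sum {ι : Type*} (s : Finset ι) (f : ι → Matrix (Fin 3) (Fin 3) ℝ) :
    psi (∑ i ∈ s, f i) = ∑ i ∈ s, psi (f i) :=
  map_sum psiLinearMap f s

theorem psi_smul (c : ℝ) (A : Matrix (Fin 3) (Fin 3) ℝ) : psi (c • A) = c • psi A :=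
  map_smul psiLinearMap c A

theorem psi_sum_smul_vecMulVec_mul {ι : Type*} [Fintype ι] (k : ι → ℝ) (e : ι → Fin 3 → ℝ)
    (Q : Matrix (Fin 3) (Fin 3) ℝ) :
    psi ((∑ i, k i • vecMulVec (e i) (e i)) * Q) = -(2 : ℝ)⁻¹ • ∑ i, k i • e i ⨯₃ (Qᵀ *ᵥ e i) := by
  rw [Finset.sum_mul, psi_sum, Finset.smul_sum]
  refine Finset.sum_congr rfl fun i _ => ?_
  rw [smul_mul_assoc, psi_smul, vecMulVec_mul, ← mulVec_transpose, psi_vecMulVec, smul_comm]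

theorem innovation_terms_general (N : ℕ) (pl : Fin N → Fin 3 → ℝ)
    (k : Fin N → ℝ) (hsum : ∑ i, k i = 1)
    (pc : Fin 3 → ℝ) (hpc : pc = ∑ i, k i • pl i)
    (M : Matrix (Fin 3) (Fin 3) ℝ)
    (hM : M = ∑ i, k i • vecMulVec (pl i - pc) (pl i - pc))
    (R Rh : Matrix (Fin 3) (Fin 3) ℝ) (hR : SO3 R) (hRh : SO3 Rh)
    (p ph : Fin 3 → ℝ)
    (y : Fin N → Fin 3 → ℝ) (hy : ∀ i, y i = Rᵀ.mulVec (pl i - p))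
    (Rt : Matrix (Fin 3) (Fin 3) ℝ) (hRt : Rt = R * Rhᵀ)
    (pt : Fin 3 → ℝ) (hpt : pt = p - Rt.mulVec ph - (1 - Rt).mulVec pc) :
    (∑ i, k i • (pl i - ph - Rh.mulVec (y i))) = Rtᵀ.mulVec pt ∧
    ((2 : ℝ)⁻¹ • ∑ i, k i • (skew (pl i - pc)).mulVec (pl i - ph - Rh.mulVec (y i)))
      = psi (M * Rt) := by
  have hRtRt : Rtᵀ * Rt = 1 := hRt ▸ transpose_mul_self_of_mul_transpose hR.1 hRh.2.1
  have hRtT : Rtᵀ = Rh * Rᵀ := by rw [hRt, transpose_mul, transpose_transpose]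
  have he : ∑ i, k i • (pl i - pc) = 0 := sum_smul_sub_eq_zero hsum hpc
  have hinn : ∀ i, pl i - ph - Rh *ᵥ y i
      = (pl i - pc) - Rtᵀ *ᵥ (pl i - pc) + Rtᵀ *ᵥ pt := by
    intro i
    rw [hy, mulVec_mulVec, ← hRtT, hpt]
    exact sub_sub_transpose_mulVec_sub hRtRt _ _ _ _
  simp only [hinn, skew_mulVec]
  refine ⟨sum_smul_sub_add_eq Rtᵀ.mulVecLin hsum he _, ?_⟩
  rw [sum_smul_cross_sub_add_eq Rtᵀ he, hM, psi_sum_smul_vecMulVec_mul, smul_neg, neg_smul]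

/-- With noise-free landmark measurements `yᵢ = Rᵀ(pᵢ - p)`, the innovation
terms satisfy `y = R̃ᵀ p̃` and `σ_R = ψ(M R̃)`. -/
theorem innovation_terms (N : ℕ) (pl : Fin N → Fin 3 → ℝ)
    (k : Fin N → ℝ) (hk : ∀ i, 0 < k i) (hsum : ∑ i, k i = 1)
    (pc : Fin 3 → ℝ) (hpc : pc = ∑ i, k i • pl i)
    (M : Matrix (Fin 3) (Fin 3) ℝ)
    (hM : M = ∑ i, k i • vecMulVec (pl i - pc) (pl i - pc))
    (R Rh : Matrix (Fin 3) (Fin 3) ℝ) (hR : SO3 R) (hRh : SO3 Rh)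
    (p ph : Fin 3 → ℝ)
    (y : Fin N → Fin 3 → ℝ) (hy : ∀ i, y i = Rᵀ.mulVec (pl i - p))
    (Rt : Matrix (Fin 3) (Fin 3) ℝ) (hRt : Rt = R * Rhᵀ)
    (pt : Fin 3 → ℝ) (hpt : pt = p - Rt.mulVec ph - (1 - Rt).mulVec pc) :
    (∑ i, k i • (pl i - ph - Rh.mulVec (y i))) = Rtᵀ.mulVec pt ∧
    ((2 : ℝ)⁻¹ • ∑ i, k i • (skew (pl i - pc)).mulVec (pl i - ph - Rh.mulVec (y i)))
      = psi (M * Rt) :=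
  innovation_terms_general N pl k hsum pc hpc M hM R Rh hR hRh p ph y hy Rt hRt pt hpt
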